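/- Let α be a real number that is κ-Diophantine for some κ ≥ 1, i.e., there exists c > 0 with |qα − p| ≥ c/q^κ for all positive integers q and integers p. Then there is a constant C (depending on α and κ) such that for all real T ≥ 1 and M ≥ 1, Σ_{m=1}^{⌊MT⌋} min(1/‖mα‖, T) ≤ C (M T^{2−1/κ} + M T log T), where ‖x‖ is the distance from x to the nearest integer. -/

import Mathlib

open Finset

/-- distance from `x` to the nearest integer -/
noncomputable def dni (x : ℝ) : ℝ := |x - round x|

/-- `min (1/‖y‖, T)` with the convention that this is `T` when `‖y‖ = 0`. -/
noncomputable def minInv (y T : ℝ) : ℝ := if dni y = 0 then T else min (1 / dni y) T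

/-!
If `α` is `κ`-Diophantine with constant `c`, two integers `m < m' ≤ N` with `‖mα‖, ‖m'α‖ ≤ t`
differ by some `q` with `‖qα‖ ≤ 2t`, hence `q ≥ (c / 2t)^{1/κ}`; so at most `N (2t/c)^{1/κ} + 1`
such `m` exist. Splitting `min(1/‖mα‖, T)` dyadically according to the size of `‖mα‖`, the range
`‖mα‖ ≤ 1/T` contributes `T` per `m`, and the range `‖mα‖ ≈ 2^{-k}`, `2^k ≤ T`, contributes
`2^{k+1}` per `m`. The counting bound turns the total into `N T^{1-1/κ}` plus `N` times the
geometric series `∑_{2^k ≤ T} 2^{k(1-1/κ)}`, which is `O(T^{1-1/κ})` for `κ > 1` and `O(log T)`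
for `κ = 1`, plus `O(T)`.
-/

lemma dni_sub_le (x y : ℝ) : dni (x - y) ≤ dni x + dni y :=
  calc dni (x - y) ≤ |(x - y) - ((round x - round y : ℤ) : ℝ)| := round_le _ _
    _ = |(x - round x) - (y - round y)| := by push_cast; ring_nf
    _ ≤ dni x + dni y := abs_sub _ _

lemma card_le_div_add_one_of_separated {S : Finset ℕ} {N : ℕ} {g : ℝ} (hg : 0 < g)
    (hSN : ∀ m ∈ S, m ≤ N) (hsep : ∀ m ∈ S, ∀ m' ∈ S, m < m' → g ≤ (m' : ℝ) - m) :
    (#S : ℝ) ≤ N / g + 1 := by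
  have hmono : StrictMonoOn (fun m : ℕ => ⌊(m : ℝ) / g⌋₊) S := by
    intro m hm m' hm' hlt
    have hstep : (m : ℝ) / g + 1 ≤ m' / g := by
      rw [div_add_one hg.ne', div_le_div_iff_of_pos_right hg]
      linarith [hsep m hm m' hm' hlt]
    calc ⌊(m : ℝ) / g⌋₊ < ⌊(m : ℝ) / g + 1⌋₊ := by rw [Nat.floor_add_one (by positivity)]; omega
      _ ≤ ⌊(m' : ℝ) / g⌋₊ := Nat.floor_le_floor hstep
  have hmaps : Set.MapsTo (fun m : ℕ => ⌊(m : ℝ) / g⌋₊) S (range (⌊(N : ℝ) / g⌋₊ + 1)) := by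
    intro m hm
    rw [coe_range, Set.mem_Iio, Nat.lt_succ_iff]
    exact Nat.floor_le_floor (by gcongr; exact_mod_cast hSN m hm)
  have hcard : #S ≤ ⌊(N : ℝ) / g⌋₊ + 1 := by
    simpa using card_le_card_of_injOn _ hmaps hmono.injOn
  calc (#S : ℝ) ≤ ⌊(N : ℝ) / g⌋₊ + 1 := by exact_mod_cast hcard
    _ ≤ N / g + 1 := by gcongr; exact Nat.floor_le (by positivity)

lemma self_mul_inv_rpow {x : ℝ} (hx : 0 < x) (y : ℝ) : x * x⁻¹ ^ y = x ^ (1 - y) := by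
  rw [Real.inv_rpow hx.le, Real.rpow_sub hx, Real.rpow_one, div_eq_mul_inv]

lemma minInv_le_dyadic {y T : ℝ} (hT : 1 ≤ T) {K : ℕ} (hK : T < 2 ^ (K + 1)) :
    minInv y T ≤ (if dni y ≤ T⁻¹ then T else 0)
      + ∑ k ∈ range (K + 1), if dni y ≤ (2 ^ k)⁻¹ then (2 : ℝ) ^ (k + 1) else 0 := by
  by_cases hsmall : dni y ≤ T⁻¹
  · have hle : minInv y T ≤ T := by unfold minInv; split_ifs <;> simp
    have hsum : 0 ≤ ∑ k ∈ range (K + 1), if dni y ≤ (2 ^ k)⁻¹ then (2 : ℝ) ^ (k + 1) else 0 :=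
      sum_nonneg fun k _ => by split_ifs <;> positivity
    rw [if_pos hsmall]
    linarith
  rw [if_neg hsmall, zero_add]
  have hd : 0 < dni y := (by positivity : (0 : ℝ) < T⁻¹).trans (not_le.mp hsmall)
  have hinv : 1 ≤ (dni y)⁻¹ := (one_le_inv₀ hd).mpr ((abs_sub_round y).trans (by norm_num))
  obtain ⟨k, hk, hk'⟩ := exists_nat_pow_near hinv one_lt_two
  have hkK : k ∈ range (K + 1) := by
    have : (2 : ℝ) ^ k < 2 ^ (K + 1) :=
      hk.trans_lt (((inv_lt_comm₀ (by positivity) hd).mp (not_le.mp hsmall)).trans hK)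
    exact mem_range.mpr ((pow_lt_pow_iff_right₀ one_lt_two).mp this)
  calc minInv y T ≤ (dni y)⁻¹ := by
        unfold minInv; rw [if_neg hd.ne', one_div]; exact min_le_left _ _
    _ ≤ if dni y ≤ (2 ^ k)⁻¹ then (2 : ℝ) ^ (k + 1) else 0 := by
        rw [if_pos ((le_inv_comm₀ hd (by positivity)).mpr hk)]; exact hk'.le
    _ ≤ _ := single_le_sum (f := fun k => if dni y ≤ (2 ^ k)⁻¹ then (2 : ℝ) ^ (k + 1) else 0)
        (fun k _ => by split_ifs <;> positivity) hkK

lemma sum_minInv_le_sum_card (f : ℕ → ℝ) (s : Finset ℕ) {T : ℝ} (hT : 1 ≤ T) {K : ℕ}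
    (hK : T < 2 ^ (K + 1)) :
    ∑ m ∈ s, minInv (f m) T ≤ T * #{m ∈ s | dni (f m) ≤ T⁻¹}
      + ∑ k ∈ range (K + 1), (2 : ℝ) ^ (k + 1) * #{m ∈ s | dni (f m) ≤ (2 ^ k)⁻¹} := by
  refine (sum_le_sum fun m _ => minInv_le_dyadic hT hK).trans_eq ?_
  rw [sum_add_distrib, sum_comm]
  simp only [← sum_filter, sum_const, nsmul_eq_mul, mul_comm]

lemma exists_geom_sum_two_rpow_le {θ : ℝ} (hθ : 0 ≤ θ) :
    ∃ D > 0, ∀ (K : ℕ) (T : ℝ), 1 ≤ T → 2 ^ K ≤ T →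
      ∑ k ∈ range (K + 1), ((2 : ℝ) ^ θ) ^ k ≤ D * (T ^ θ + Real.log T) := by
  rcases hθ.eq_or_lt with rfl | hθ
  · refine ⟨2, two_pos, fun K T hT hK => ?_⟩
    have hlog : K * Real.log 2 ≤ Real.log T := by
      simpa [Real.log_pow] using Real.log_le_log (by positivity) hK
    have := Real.log_two_gt_d9
    simp only [Real.rpow_zero, one_pow, sum_const, card_range, nsmul_eq_mul, mul_one]
    push_cast
    nlinarith
  · have hr : 1 < (2 : ℝ) ^ θ := Real.one_lt_rpow one_lt_two hθ
    set r := (2 : ℝ) ^ θ with hr_def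
    have hr1 : 0 < r - 1 := sub_pos.mpr hr
    refine ⟨r / (r - 1), by positivity, fun K T hT hK => ?_⟩
    calc ∑ k ∈ range (K + 1), r ^ k = (r ^ (K + 1) - 1) / (r - 1) := geom_sum_eq hr.ne' _
      _ ≤ r / (r - 1) * r ^ K := by
        rw [div_mul_eq_mul_div, pow_succ']
        gcongr
        exact sub_le_self _ zero_le_one
      _ ≤ r / (r - 1) * T ^ θ := by
        rw [hr_def, Real.rpow_pow_comm zero_le_two]
        gcongr
      _ ≤ r / (r - 1) * (T ^ θ + Real.log T) := by
        gcongr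
        exact le_add_of_nonneg_right (Real.log_nonneg hT)

section Diophantine

variable {α c κ : ℝ} (hc : 0 < c) (hκ : 0 < κ)
  (hdio : ∀ q : ℕ, 0 < q → ∀ p : ℤ, c / (q : ℝ) ^ κ ≤ |(q : ℝ) * α - (p : ℝ)|)
include hc hκ hdio

lemma rpow_inv_le_of_dni_le {q : ℕ} (hq : 0 < q) {s : ℝ} (hs : 0 < s) (h : dni (q * α) ≤ s) :
    (c / s) ^ κ⁻¹ ≤ q := by
  have hbound : c / (q : ℝ) ^ κ ≤ s := (hdio q hq (round (q * α))).trans h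
  rw [Real.rpow_inv_le_iff_of_pos (by positivity) (by positivity) hκ, div_le_iff₀ hs]
  rwa [div_le_iff₀ (by positivity), mul_comm] at hbound

lemma card_dni_le (N : ℕ) {t : ℝ} (ht : 0 < t) :
    (#{m ∈ Icc 1 N | dni ((m : ℕ) * α) ≤ t} : ℝ) ≤ (2 / c) ^ κ⁻¹ * N * t ^ κ⁻¹ + 1 := by
  have hg : 0 < (c / (2 * t)) ^ κ⁻¹ := by positivity
  refine (card_le_div_add_one_of_separated (N := N) hg ?_ ?_).trans_eq ?_
  · intro m hm
    exact (mem_Icc.mp (mem_filter.mp hm).1).2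
  · intro m hm m' hm' hlt
    simp only [mem_filter] at hm hm'
    have hdiff : dni ((m' - m : ℕ) * α) ≤ 2 * t := by
      rw [Nat.cast_sub hlt.le, sub_mul]
      linarith [dni_sub_le (m' * α) (m * α)]
    simpa [Nat.cast_sub hlt.le] using
      rpow_inv_le_of_dni_le hc hκ hdio (Nat.sub_pos_of_lt hlt) (by positivity) hdiff
  · rw [Real.div_rpow hc.le (by positivity), Real.mul_rpow zero_le_two ht.le,
      Real.div_rpow zero_le_two hc.le]
    field_simp

lemma sum_minInv_le {N K : ℕ} {T : ℝ} (hT : 1 ≤ T) (hK : 2 ^ K ≤ T) (hK' : T < 2 ^ (K + 1)) :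
    ∑ m ∈ Icc 1 N, minInv (m * α) T
      ≤ (2 / c) ^ κ⁻¹ * N * (T ^ (1 - κ⁻¹) + 2 * ∑ k ∈ range (K + 1), ((2 : ℝ) ^ (1 - κ⁻¹)) ^ k)
        + 5 * T := by
  set A := (2 / c) ^ κ⁻¹
  have hweight (x : ℝ) (hx : 0 < x) :
      x * (A * N * x⁻¹ ^ κ⁻¹ + 1) = A * N * x ^ (1 - κ⁻¹) + x := by
    rw [← self_mul_inv_rpow hx]; ring
  have hweights : ∑ k ∈ range (K + 1), (2 : ℝ) ^ (k + 1) ≤ 4 * T := by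
    simp_rw [pow_succ, ← sum_mul, geom_sum_eq (by norm_num : (2 : ℝ) ≠ 1)]
    linarith [pow_succ (2 : ℝ) K]
  calc ∑ m ∈ Icc 1 N, minInv (m * α) T
      ≤ T * #{m ∈ Icc 1 N | dni ((m : ℕ) * α) ≤ T⁻¹}
        + ∑ k ∈ range (K + 1), (2 : ℝ) ^ (k + 1) * #{m ∈ Icc 1 N | dni ((m : ℕ) * α) ≤ (2 ^ k)⁻¹} :=
        sum_minInv_le_sum_card _ _ hT hK'
    _ ≤ T * (A * N * T⁻¹ ^ κ⁻¹ + 1)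
        + ∑ k ∈ range (K + 1), (2 : ℝ) ^ (k + 1) * (A * N * ((2 : ℝ) ^ k)⁻¹ ^ κ⁻¹ + 1) := by
        gcongr <;> exact card_dni_le hc hκ hdio N (by positivity)
    _ = A * N * T ^ (1 - κ⁻¹) + T
        + ∑ k ∈ range (K + 1), (2 * A * N * ((2 : ℝ) ^ (1 - κ⁻¹)) ^ k + 2 ^ (k + 1)) := by
        rw [hweight T (by positivity)]
        refine congrArg _ (sum_congr rfl fun k _ => ?_)
        rw [pow_succ, mul_comm _ (2 : ℝ), mul_assoc, hweight _ (by positivity),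
          ← Real.rpow_pow_comm zero_le_two]
        ring
    _ ≤ _ := by
        rw [sum_add_distrib, ← mul_sum]
        linarith [hweights]

end Diophantine

theorem sum_minInv_bound (α : ℝ) (κ : ℝ) (hκ : 1 ≤ κ)
    (hdio : ∃ c > 0, ∀ q : ℕ, 0 < q → ∀ p : ℤ, c / (q : ℝ) ^ κ ≤ |(q : ℝ) * α - (p : ℝ)|) :
    ∃ C > 0, ∀ T M : ℝ, 1 ≤ T → 1 ≤ M →
      ∑ m ∈ Finset.Icc 1 ⌊M * T⌋₊, minInv ((m : ℝ) * α) T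
        ≤ C * (M * T ^ (2 - 1 / κ) + M * T * Real.log T) := by
  obtain ⟨c, hc, hdio⟩ := hdio
  have hκ0 : 0 < κ := one_pos.trans_le hκ
  have hθ : 0 ≤ 1 - κ⁻¹ := sub_nonneg.mpr (inv_le_one_of_one_le₀ hκ)
  obtain ⟨D, hD, hgeom⟩ := exists_geom_sum_two_rpow_le hθ
  set A := (2 / c) ^ κ⁻¹
  refine ⟨A + 5 + 2 * A * D, by positivity, fun T M hT hM => ?_⟩
  obtain ⟨K, hK, hK'⟩ := exists_nat_pow_near hT one_lt_two
  have hexp : T * T ^ (1 - κ⁻¹) = T ^ (2 - 1 / κ) := by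
    rw [← Real.rpow_one_add' (by positivity) (by linarith), one_div]; ring_nf
  have hT_le : T ≤ M * T ^ (2 - 1 / κ) := by
    calc T ≤ T * T ^ (1 - κ⁻¹) := le_mul_of_one_le_right (by positivity) (Real.one_le_rpow hT hθ)
      _ ≤ M * T ^ (2 - 1 / κ) := by rw [hexp]; exact le_mul_of_one_le_left (by positivity) hM
  have hlog : 0 ≤ M * T * Real.log T := by
    have := Real.log_nonneg hT; positivity
  calc _ ≤ A * ⌊M * T⌋₊ * (T ^ (1 - κ⁻¹) + 2 * ∑ k ∈ range (K + 1), ((2 : ℝ) ^ (1 - κ⁻¹)) ^ k)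
        + 5 * T := sum_minInv_le hc hκ0 hdio hT hK hK'
    _ ≤ A * (M * T) * (T ^ (1 - κ⁻¹) + 2 * (D * (T ^ (1 - κ⁻¹) + Real.log T)))
        + 5 * (M * T ^ (2 - 1 / κ)) := by
        gcongr
        · exact Nat.floor_le (by positivity)
        · exact hgeom K T hT hK
    _ = (A + 2 * A * D + 5) * (M * T ^ (2 - 1 / κ)) + 2 * A * D * (M * T * Real.log T) := by
        rw [← hexp]; ring
    _ ≤ _ := by nlinarith [mul_nonneg (by positivity : 0 ≤ A + 5) hlog]
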